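/- arXiv:1909.04089 — 5 statements merged into one kernel-verified Lean document; each statement's English description precedes it below -/
import Mathlib

section
/- The nine points P_1,...,P_9 dual to the lines of the Fermat arrangement 𝒜⁰_3(3), namely the points (1:−ε^a:0), (1:0:−ε^a), (0:1:−ε^a) for a = 0,1,2, form a complete intersection: their homogeneous ideal in ℂ[x_0,x_1,x_2] is generated by x_0x_1x_2 and x_0³ + x_1³ + x_2³. -/
open MvPolynomial

/-- Representatives of the nine points in `ℙ²(ℂ)` dual to the lines of the Fermat
arrangement `𝒜⁰_3(3)`. -/
def ninePoints (ε : ℂ) : Fin 9 → (Fin 3 → ℂ) :=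
  ![![1, -1, 0], ![1, -ε, 0], ![1, -ε ^ 2, 0],
    ![1, 0, -1], ![1, 0, -ε], ![1, 0, -ε ^ 2],
    ![0, 1, -1], ![0, 1, -ε], ![0, 1, -ε ^ 2]]

/-! The coordinate line `x_k = 0` carries three of the points, where `x_j = -εᵃ x_i`, and
`x_i³ + x_j³ = ∏ₐ (x_j + εᵃ x_i)`. So if `f` vanishes at them, `x_i³ + x_j³` divides `f|_{x_k = 0}`;
as `x_i³ + x_j³ ≡ F = x_0³ + x_1³ + x_2³` modulo `x_k`, this gives `f = F u + x_k g`, and `g` vanishes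
at the points off `x_k = 0`. Peeling off `x_2`, `x_1`, `x_0` in turn gives `f ∈ (F, x_0 x_1 x_2)`.

Vanishing on the line `ℂ v` is tested on the restriction `restrictLine v f : K[t]`: the target is a
domain, so the factor `x_k` can be cancelled there, even at `t = 0`. -/

namespace MvPolynomial

section Substitution

variable {R σ : Type*} [CommRing R] [DecidableEq σ]

theorem X_sub_dvd_sub_aeval_update (i : σ) (q p : MvPolynomial σ R) :
    X i - q ∣ p - aeval (Function.update X i q) p := by
  induction p using MvPolynomial.induction_on with
  | C a => simp
  | add p p' hp hp' => simpa [add_sub_add_comm] using dvd_add hp hp'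
  | mul_X p j hp =>
    rcases eq_or_ne j i with rfl | hji
    · rw [map_mul, aeval_X, Function.update_self]
      have : p * X j - aeval (Function.update X j q) p * q =
          (p - aeval (Function.update X j q) p) * X j +
            aeval (Function.update X j q) p * (X j - q) := by ring
      rw [this]
      exact dvd_add (hp.mul_right _) (dvd_mul_left _ _)
    · rw [map_mul, aeval_X, Function.update_of_ne hji, ← sub_mul]
      exact hp.mul_right _

theorem mul_X_sub_dvd_of_aeval_update_eq_zero [IsDomain R] {i : σ} {q d p : MvPolynomial σ R}
    (hd : d ∣ p) (hp : aeval (Function.update X i q) p = 0)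
    (hd₀ : aeval (Function.update X i q) d ≠ 0) : d * (X i - q) ∣ p := by
  obtain ⟨s, rfl⟩ := hd
  have hs : aeval (Function.update X i q) s = 0 := by
    rw [map_mul] at hp
    exact (mul_eq_zero.1 hp).resolve_left hd₀
  refine mul_dvd_mul_left d ?_
  simpa only [hs, sub_zero] using X_sub_dvd_sub_aeval_update i q s

theorem exists_eq_mul_add_X_mul_of_dvd {i : σ} {d F f : MvPolynomial σ R}
    (hd : d ∣ aeval (Function.update X i 0) f) (hF : X i ∣ F - d) :
    ∃ u g, f = F * u + X i * g := by
  obtain ⟨u, hu⟩ := hd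
  obtain ⟨a, ha⟩ : X i ∣ f - aeval (Function.update X i 0) f := by
    simpa using X_sub_dvd_sub_aeval_update i 0 f
  obtain ⟨b, hb⟩ := hF
  exact ⟨u, a - b * u, by linear_combination ha + hu - u * hb⟩

end Substitution

section Field

variable {K σ : Type*} [Field K]

theorem X_pow_three_add_X_pow_three_eq {ε : K} (hε : IsPrimitiveRoot ε 3) (i j : σ) :
    (X j ^ 3 + X i ^ 3 : MvPolynomial σ K) =
      (X j - C (-1) * X i) * (X j - C (-ε) * X i) * (X j - C (-ε ^ 2) * X i) := by
  have h₃ : C ε ^ 3 = (1 : MvPolynomial σ K) := by rw [← map_pow, hε.pow_eq_one, map_one]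
  have hsum : 1 + C ε + C ε ^ 2 = (0 : MvPolynomial σ K) := by
    have := hε.geom_sum_eq_zero (by norm_num)
    simp only [Finset.sum_range_succ, Finset.sum_range_zero, pow_zero, pow_one, zero_add] at this
    simpa using congrArg (C (σ := σ)) this
  simp only [map_neg, map_one, map_pow]
  linear_combination -(X j ^ 2 * X i + C ε * X j * X i ^ 2) * hsum - X i ^ 3 * h₃

variable [DecidableEq σ]

theorem aeval_update_X_sub_C_mul_X {i j : σ} (hij : i ≠ j) (c d : K) :
    aeval (Function.update X j (C c * X i)) (X j - C d * X i) = C (c - d) * X i := by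
  simp [Function.update_of_ne hij, C_sub, sub_mul]

theorem X_sub_C_mul_X_mul_mul_dvd {i j : σ} (hij : i ≠ j) {c₀ c₁ c₂ : K}
    (h₀₁ : c₀ ≠ c₁) (h₀₂ : c₀ ≠ c₂) (h₁₂ : c₁ ≠ c₂) {g : MvPolynomial σ K}
    (h₀ : aeval (Function.update X j (C c₀ * X i)) g = 0)
    (h₁ : aeval (Function.update X j (C c₁ * X i)) g = 0)
    (h₂ : aeval (Function.update X j (C c₂ * X i)) g = 0) :
    (X j - C c₀ * X i) * (X j - C c₁ * X i) * (X j - C c₂ * X i) ∣ g := by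
  have hne {c d : K} (h : c ≠ d) : C (c - d) * X i ≠ (0 : MvPolynomial σ K) :=
    mul_ne_zero (by simpa [sub_eq_zero] using h) (X_ne_zero i)
  have d₀ : X j - C c₀ * X i ∣ g := by
    simpa using mul_X_sub_dvd_of_aeval_update_eq_zero (one_dvd g) h₀ (by simp)
  have d₁ := mul_X_sub_dvd_of_aeval_update_eq_zero d₀ h₁
    (by rw [aeval_update_X_sub_C_mul_X hij]; exact hne h₀₁.symm)
  refine mul_X_sub_dvd_of_aeval_update_eq_zero d₁ h₂ ?_
  rw [map_mul, aeval_update_X_sub_C_mul_X hij, aeval_update_X_sub_C_mul_X hij]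
  exact mul_ne_zero (hne h₀₂.symm) (hne h₁₂.symm)

theorem X_pow_three_add_X_pow_three_dvd {ε : K} (hε : IsPrimitiveRoot ε 3) {i j : σ} (hij : i ≠ j)
    {g : MvPolynomial σ K} (h₀ : aeval (Function.update X j (C (-1 : K) * X i)) g = 0)
    (h₁ : aeval (Function.update X j (C (-ε) * X i)) g = 0)
    (h₂ : aeval (Function.update X j (C (-ε ^ 2) * X i)) g = 0) :
    X j ^ 3 + X i ^ 3 ∣ g := by
  have h₀₁ : (-1 : K) ≠ -ε := by simpa [eq_comm] using hε.ne_one (by norm_num)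
  have h₀₂ : (-1 : K) ≠ -ε ^ 2 := by
    simpa [eq_comm] using hε.pow_ne_one_of_pos_of_lt (l := 2) (by norm_num) (by norm_num)
  have h₁₂ : -ε ≠ -ε ^ 2 := fun h => by
    simpa using hε.pow_inj (i := 1) (j := 2) (by norm_num) (by norm_num) (by simpa using h)
  rw [X_pow_three_add_X_pow_three_eq hε]
  exact X_sub_C_mul_X_mul_mul_dvd hij h₀₁ h₀₂ h₁₂ h₀ h₁ h₂

end Field

section Line

variable {K σ : Type*} [Field K]

noncomputable def restrictLine (v : σ → K) : MvPolynomial σ K →ₐ[K] Polynomial K :=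
  aeval fun l => Polynomial.C (v l) * Polynomial.X

@[simp]
theorem restrictLine_X (v : σ → K) (l : σ) :
    restrictLine v (X l) = Polynomial.C (v l) * Polynomial.X :=
  aeval_X _ _

theorem aeval_restrictLine {A : Type*} [CommRing A] [Algebra K A] (v : σ → K) (a : A)
    (f : MvPolynomial σ K) :
    Polynomial.aeval a (restrictLine v f) = aeval (fun l => algebraMap K A (v l) * a) f := by
  simp [restrictLine, comp_aeval_apply]

theorem restrictLine_eq_zero_iff [Infinite K] {v : σ → K} {f : MvPolynomial σ K} :
    restrictLine v f = 0 ↔ ∀ t : K, eval (t • v) f = 0 := by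
  have h (t : K) : (restrictLine v f).eval t = eval (t • v) f := by
    rw [← Polynomial.coe_aeval_eq_eval, aeval_restrictLine]
    simp [mul_comm, Pi.smul_def]
  refine ⟨fun hf t => by rw [← h, hf, Polynomial.eval_zero], fun hf => ?_⟩
  exact Polynomial.funext fun t => by rw [h, hf, Polynomial.eval_zero]

theorem restrictLine_eq_zero_of_mul_add_X_mul {v : σ → K} {k : σ} {q u g : MvPolynomial σ K}
    (hq : restrictLine v q = 0) (h : restrictLine v (q * u + X k * g) = 0) (hk : v k ≠ 0) :
    restrictLine v g = 0 := by
  simp only [map_add, map_mul, hq, zero_mul, zero_add, restrictLine_X] at h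
  exact (mul_eq_zero.1 h).resolve_left
    (mul_ne_zero (Polynomial.C_ne_zero.2 hk) Polynomial.X_ne_zero)

theorem aeval_update_aeval_update_zero_eq_zero {v : Fin 3 → K} {i j k : Fin 3} (hij : i ≠ j)
    (hik : i ≠ k) (hjk : j ≠ k) (hvi : v i = 1) (hvk : v k = 0) {f : MvPolynomial (Fin 3) K}
    (hf : restrictLine v f = 0) :
    aeval (Function.update X j (C (v j) * X i))
      (aeval (Function.update X k (0 : MvPolynomial (Fin 3) K)) f) = 0 := by
  have hcomp : (aeval (Function.update X j (C (v j) * X i))).comp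
      (aeval (Function.update X k (0 : MvPolynomial (Fin 3) K))) = aeval fun l => C (v l) * X i := by
    rw [comp_aeval]
    congr 1
    funext l
    obtain rfl | rfl | rfl : l = i ∨ l = j ∨ l = k := by omega
    · simp [Function.update_of_ne hij, Function.update_of_ne hik, hvi]
    · simp [Function.update_of_ne hjk]
    · simp [hvk]
  rw [← AlgHom.comp_apply, hcomp]
  simpa [hf] using (aeval_restrictLine v (X i : MvPolynomial (Fin 3) K) f).symm

end Line

end MvPolynomial

section NinePoints

variable {ε : ℂ}

theorem ninePoints_ne_zero_of_eq_zero (hε : ε ≠ 0) {m : Fin 9} {k k' : Fin 3} (hkk' : k ≠ k')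
    (h : ninePoints ε m k = 0) : ninePoints ε m k' ≠ 0 := by
  fin_cases m <;> fin_cases k <;> fin_cases k' <;> simp_all [ninePoints]

theorem restrictLine_ninePoints_X_mul_X_mul_X (m : Fin 9) :
    restrictLine (ninePoints ε m) (X 0 * X 1 * X 2) = 0 := by
  fin_cases m <;> simp [ninePoints]

theorem restrictLine_ninePoints_fermat (hε : ε ^ 3 = 1) (m : Fin 9) :
    restrictLine (ninePoints ε m) (X 0 ^ 3 + X 1 ^ 3 + X 2 ^ 3) = 0 := by
  have hC : Polynomial.C ε ^ 3 = 1 := by rw [← map_pow, hε, map_one]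
  fin_cases m <;> simp [ninePoints] <;>
    first
    | ring1
    | linear_combination -Polynomial.X ^ 3 * hC
    | linear_combination -Polynomial.X ^ 3 * (Polynomial.C ε ^ 3 + 1) * hC

theorem exists_eq_fermat_mul_add_X_mul (hε : IsPrimitiveRoot ε 3) (k : Fin 3)
    {f : MvPolynomial (Fin 3) ℂ}
    (hf : ∀ m, ninePoints ε m k = 0 → restrictLine (ninePoints ε m) f = 0) :
    ∃ u g, f = (X 0 ^ 3 + X 1 ^ 3 + X 2 ^ 3) * u + X k * g := by
  have h (m : Fin 9) {i j : Fin 3} (hijk : i ≠ j ∧ i ≠ k ∧ j ≠ k)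
      (hi : ninePoints ε m i = 1) (hk : ninePoints ε m k = 0) :=
    aeval_update_aeval_update_zero_eq_zero hijk.1 hijk.2.1 hijk.2.2 hi hk (hf m hk)
  obtain rfl | rfl | rfl : k = 0 ∨ k = 1 ∨ k = 2 := by omega
  · exact exists_eq_mul_add_X_mul_of_dvd (X_pow_three_add_X_pow_three_dvd hε (i := 1) (j := 2)
      (by decide) (h 6 (by decide) rfl rfl) (h 7 (by decide) rfl rfl) (h 8 (by decide) rfl rfl))
      ⟨X 0 ^ 2, by ring⟩
  · exact exists_eq_mul_add_X_mul_of_dvd (X_pow_three_add_X_pow_three_dvd hε (i := 0) (j := 2)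
      (by decide) (h 3 (by decide) rfl rfl) (h 4 (by decide) rfl rfl) (h 5 (by decide) rfl rfl))
      ⟨X 1 ^ 2, by ring⟩
  · exact exists_eq_mul_add_X_mul_of_dvd (X_pow_three_add_X_pow_three_dvd hε (i := 0) (j := 1)
      (by decide) (h 0 (by decide) rfl rfl) (h 1 (by decide) rfl rfl) (h 2 (by decide) rfl rfl))
      ⟨X 2 ^ 2, by ring⟩

end NinePoints

theorem ninePoints_complete_intersection (ε : ℂ) (hε : IsPrimitiveRoot ε 3)
    (f : MvPolynomial (Fin 3) ℂ) :
    (∀ k : Fin 9, ∀ t : ℂ, MvPolynomial.eval (t • ninePoints ε k) f = 0) ↔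
      f ∈ Ideal.span ({X 0 * X 1 * X 2, X 0 ^ 3 + X 1 ^ 3 + X 2 ^ 3} :
        Set (MvPolynomial (Fin 3) ℂ)) := by
  simp_rw [← restrictLine_eq_zero_iff]
  have hF := restrictLine_ninePoints_fermat hε.pow_eq_one
  have hε₀ : ε ≠ 0 := hε.ne_zero (by norm_num)
  constructor
  · intro h
    obtain ⟨u, g, rfl⟩ := exists_eq_fermat_mul_add_X_mul hε 2 fun m _ => h m
    have hg m (hm : ninePoints ε m 2 ≠ 0) := restrictLine_eq_zero_of_mul_add_X_mul (hF m) (h m) hm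
    obtain ⟨w, p, rfl⟩ := exists_eq_fermat_mul_add_X_mul hε 1 fun m hm =>
      hg m (ninePoints_ne_zero_of_eq_zero hε₀ (by decide) hm)
    have hp m (hm : ninePoints ε m 0 = 0) : restrictLine (ninePoints ε m) p = 0 := by
      have h₁ := ninePoints_ne_zero_of_eq_zero hε₀ (k' := 1) (by decide) hm
      have h₂ := ninePoints_ne_zero_of_eq_zero hε₀ (k' := 2) (by decide) hm
      exact restrictLine_eq_zero_of_mul_add_X_mul (hF m) (hg m h₂) h₁
    obtain ⟨s, n, rfl⟩ := exists_eq_fermat_mul_add_X_mul hε 0 hp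
    exact Ideal.mem_span_pair.2 ⟨n, u + X 2 * w + X 2 * X 1 * s, by ring⟩
  · intro hf m
    refine (Ideal.span_le (I := RingHom.ker (restrictLine (ninePoints ε m)))).2 ?_ hf
    exact Set.insert_subset_iff.2 ⟨restrictLine_ninePoints_X_mul_X_mul_X m,
      Set.singleton_subset_iff.2 (hF m)⟩
end

section
/- The sextic form S_R(x_0:x_1:x_2) = a⁵x_1x_2(x_1⁴−x_2⁴) + b⁵x_0x_2(x_2⁴−x_0⁴) + c⁵x_0x_1(x_0⁴−x_1⁴) + 10a³x_0²x_1x_2(b²x_1²−c²x_2²) + 10b³x_0x_1²x_2(c²x_2²−a²x_0²) + 10c³x_0x_1x_2²(a²x_0²−b²x_1²) + 5a(b⁴−c⁴)x_0⁴x_1x_2 + 5b(c⁴−a⁴)x_0x_1⁴x_2 + 5c(a⁴−b⁴)x_0x_1x_2⁴ vanishes to order 5 at R = (a:b:c), i.e., all its partial derivatives of order ≤ 4 vanish at (a,b,c). -/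
open MvPolynomial

/-- Iterated partial derivative with respect to a multi-index `k`. -/
noncomputable def pderivMulti (k : Fin 3 → ℕ)
    (f : MvPolynomial (Fin 3) ℂ) : MvPolynomial (Fin 3) ℂ :=
  (fun g => pderiv 0 g)^[k 0] ((fun g => pderiv 1 g)^[k 1]
    ((fun g => pderiv 2 g)^[k 2] f))

/-- The unexpected sextic for `𝒜¹_3(4)`. -/
noncomputable def sexticS (a b c : ℂ) : MvPolynomial (Fin 3) ℂ :=
  C (a ^ 5) * (X 1 * X 2 * (X 1 ^ 4 - X 2 ^ 4)) +
  C (b ^ 5) * (X 0 * X 2 * (X 2 ^ 4 - X 0 ^ 4)) +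
  C (c ^ 5) * (X 0 * X 1 * (X 0 ^ 4 - X 1 ^ 4)) +
  C (10 * a ^ 3) * (X 0 ^ 2 * X 1 * X 2) * (C (b ^ 2) * X 1 ^ 2 - C (c ^ 2) * X 2 ^ 2) +
  C (10 * b ^ 3) * (X 0 * X 1 ^ 2 * X 2) * (C (c ^ 2) * X 2 ^ 2 - C (a ^ 2) * X 0 ^ 2) +
  C (10 * c ^ 3) * (X 0 * X 1 * X 2 ^ 2) * (C (a ^ 2) * X 0 ^ 2 - C (b ^ 2) * X 1 ^ 2) +
  C (5 * a * (b ^ 4 - c ^ 4)) * (X 0 ^ 4 * X 1 * X 2) +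
  C (5 * b * (c ^ 4 - a ^ 4)) * (X 0 * X 1 ^ 4 * X 2) +
  C (5 * c * (a ^ 4 - b ^ 4)) * (X 0 * X 1 * X 2 ^ 4)

lemma iter_pderiv_mul_pow (i : Fin 3) (p : MvPolynomial (Fin 3) ℂ)
    (hp : pderiv i p = 0) (m n : ℕ) :
    (fun g => pderiv i g)^[n] (p * X i ^ m) =
      C ((m.descFactorial n : ℕ) : ℂ) * p * X i ^ (m - n) := by
  induction n with
  | zero => simp
  | succ n ih =>
    rw [Function.iterate_succ_apply', ih]
    rcases le_or_gt m n with h | h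
    · have h1 : m - n = 0 := by omega
      have h2 : m.descFactorial (n+1) = 0 := Nat.descFactorial_eq_zero_iff_lt.mpr (by omega)
      simp [h1, h2, pderiv_mul, hp]
    · have h1 : m - n = (m - (n+1)) + 1 := by omega
      have h2 : m.descFactorial (n+1) = (m - (n+1) + 1) * m.descFactorial n := by
        rw [Nat.descFactorial_succ, show m - n = m - (n+1) + 1 from by omega]
      rw [h1, h2]
      simp only [pderiv_mul, pderiv_C, hp, pderiv_pow, pderiv_X_self, mul_zero, zero_mul,
        add_zero, zero_add, mul_one, Nat.cast_mul, C_mul, Nat.add_sub_cancel]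
      rw [← C_eq_coe_nat]
      push_cast
      ring

lemma iter_pderiv_add (i : Fin 3) (n : ℕ) (p q : MvPolynomial (Fin 3) ℂ) :
    (fun g => pderiv i g)^[n] (p + q) =
      (fun g => pderiv i g)^[n] p + (fun g => pderiv i g)^[n] q := by
  induction n generalizing p q with
  | zero => simp
  | succ n ih =>
    rw [Function.iterate_succ_apply', Function.iterate_succ_apply',
      Function.iterate_succ_apply', ih, map_add]

lemma pderivMulti_add (k : Fin 3 → ℕ) (p q : MvPolynomial (Fin 3) ℂ) :
    pderivMulti k (p + q) = pderivMulti k p + pderivMulti k q := by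
  unfold pderivMulti
  rw [iter_pderiv_add, iter_pderiv_add, iter_pderiv_add]

lemma eval_pderivMulti_mon (a b c : ℂ) (k : Fin 3 → ℕ) (r : ℂ) (e0 e1 e2 : ℕ) :
    MvPolynomial.eval ![a, b, c]
        (pderivMulti k (C r * X 0 ^ e0 * X 1 ^ e1 * X 2 ^ e2)) =
      r * (e0.descFactorial (k 0)) * (e1.descFactorial (k 1)) * (e2.descFactorial (k 2)) *
        a ^ (e0 - k 0) * b ^ (e1 - k 1) * c ^ (e2 - k 2) := by
  unfold pderivMulti
  rw [show (C r * X 0 ^ e0 * X 1 ^ e1 * X 2 ^ e2 : MvPolynomial (Fin 3) ℂ)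
      = (C r * X 0 ^ e0 * X 1 ^ e1) * X 2 ^ e2 from by ring,
    iter_pderiv_mul_pow 2 _ (by simp [pderiv_mul, pderiv_X_of_ne]) e2 (k 2)]
  rw [show (C ((e2.descFactorial (k 2) : ℕ) : ℂ) * (C r * X 0 ^ e0 * X 1 ^ e1) * X 2 ^ (e2 - k 2)
        : MvPolynomial (Fin 3) ℂ)
      = (C ((e2.descFactorial (k 2) : ℕ) : ℂ) * C r * X 0 ^ e0 * X 2 ^ (e2 - k 2)) * X 1 ^ e1
      from by ring,
    iter_pderiv_mul_pow 1 _ (by simp [pderiv_mul, pderiv_X_of_ne]) e1 (k 1)]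
  rw [show (C ((e1.descFactorial (k 1) : ℕ) : ℂ) *
        (C ((e2.descFactorial (k 2) : ℕ) : ℂ) * C r * X 0 ^ e0 * X 2 ^ (e2 - k 2)) * X 1 ^ (e1 - k 1)
        : MvPolynomial (Fin 3) ℂ)
      = (C ((e1.descFactorial (k 1) : ℕ) : ℂ) * C ((e2.descFactorial (k 2) : ℕ) : ℂ) * C r *
          X 1 ^ (e1 - k 1) * X 2 ^ (e2 - k 2)) * X 0 ^ e0
      from by ring,
    iter_pderiv_mul_pow 0 _ (by simp [pderiv_mul, pderiv_X_of_ne]) e0 (k 0)]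
  simp [eval_mul, eval_pow]
  ring

set_option maxHeartbeats 1600000 in
theorem sexticS_vanishes_to_order_five (a b c : ℂ) (k : Fin 3 → ℕ)
    (hk : (∑ i, k i) ≤ 4) :
    MvPolynomial.eval ![a, b, c] (pderivMulti k (sexticS a b c)) = 0 := by
  have hsplit : sexticS a b c =
      C (a ^ 5) * X 0 ^ 0 * X 1 ^ 5 * X 2 ^ 1 +
      C (-(a ^ 5)) * X 0 ^ 0 * X 1 ^ 1 * X 2 ^ 5 +
      C (b ^ 5) * X 0 ^ 1 * X 1 ^ 0 * X 2 ^ 5 +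
      C (-(b ^ 5)) * X 0 ^ 5 * X 1 ^ 0 * X 2 ^ 1 +
      C (c ^ 5) * X 0 ^ 5 * X 1 ^ 1 * X 2 ^ 0 +
      C (-(c ^ 5)) * X 0 ^ 1 * X 1 ^ 5 * X 2 ^ 0 +
      C (10 * a ^ 3 * b ^ 2) * X 0 ^ 2 * X 1 ^ 3 * X 2 ^ 1 +
      C (-(10 * a ^ 3 * c ^ 2)) * X 0 ^ 2 * X 1 ^ 1 * X 2 ^ 3 +
      C (10 * b ^ 3 * c ^ 2) * X 0 ^ 1 * X 1 ^ 2 * X 2 ^ 3 +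
      C (-(10 * b ^ 3 * a ^ 2)) * X 0 ^ 3 * X 1 ^ 2 * X 2 ^ 1 +
      C (10 * c ^ 3 * a ^ 2) * X 0 ^ 3 * X 1 ^ 1 * X 2 ^ 2 +
      C (-(10 * c ^ 3 * b ^ 2)) * X 0 ^ 1 * X 1 ^ 3 * X 2 ^ 2 +
      C (5 * a * (b ^ 4 - c ^ 4)) * X 0 ^ 4 * X 1 ^ 1 * X 2 ^ 1 +
      C (5 * b * (c ^ 4 - a ^ 4)) * X 0 ^ 1 * X 1 ^ 4 * X 2 ^ 1 +
      C (5 * c * (a ^ 4 - b ^ 4)) * X 0 ^ 1 * X 1 ^ 1 * X 2 ^ 4 := by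
    simp only [sexticS, map_mul, map_sub, map_neg, map_pow, map_ofNat]
    ring
  rw [hsplit]
  simp only [pderivMulti_add, map_add, eval_pderivMulti_mon]
  have h0 : k 0 ≤ 4 := by
    have := Fin.sum_univ_three k ▸ hk; omega
  have h1 : k 1 ≤ 4 := by
    have := Fin.sum_univ_three k ▸ hk; omega
  have h2 : k 2 ≤ 4 := by
    have := Fin.sum_univ_three k ▸ hk; omega
  have hsum : k 0 + k 1 + k 2 ≤ 4 := by
    have := Fin.sum_univ_three k ▸ hk; omega
  set n0 := k 0 with hn0
  set n1 := k 1 with hn1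
  set n2 := k 2 with hn2
  clear_value n0 n1 n2
  clear hn0 hn1 hn2 hk hsplit
  interval_cases n0 <;> interval_cases n1 <;> interval_cases n2 <;>
    first
    | omega
    | (simp [Nat.descFactorial]; try ring)
end

section
/- The quartic Q_R (as defined) vanishes at the four coordinate points of ℙ³ and at all 27 points of the form (1:ε^α:ε^β:ε^γ) with α, β, γ ∈ {1,2,3}, where ε is a primitive cube root of unity. -/
/-- The unexpected quartic surface in `ℙ³`, as a function. -/
def quarticQR (a b c d x0 x1 x2 x3 : ℂ) : ℂ :=
  b ^ 2 * (c ^ 3 - d ^ 3) * (x0 ^ 3 * x1) +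
  a ^ 2 * (d ^ 3 - c ^ 3) * (x0 * x1 ^ 3) +
  c ^ 2 * (d ^ 3 - b ^ 3) * (x0 ^ 3 * x2) +
  c ^ 2 * (a ^ 3 - d ^ 3) * (x1 ^ 3 * x2) +
  a ^ 2 * (b ^ 3 - d ^ 3) * (x0 * x2 ^ 3) +
  b ^ 2 * (d ^ 3 - a ^ 3) * (x1 * x2 ^ 3) +
  d ^ 2 * (b ^ 3 - c ^ 3) * (x0 ^ 3 * x3) +
  d ^ 2 * (c ^ 3 - a ^ 3) * (x1 ^ 3 * x3) +
  d ^ 2 * (a ^ 3 - b ^ 3) * (x2 ^ 3 * x3) +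
  a ^ 2 * (c ^ 3 - b ^ 3) * (x0 * x3 ^ 3) +
  b ^ 2 * (a ^ 3 - c ^ 3) * (x1 * x3 ^ 3) +
  c ^ 2 * (b ^ 3 - a ^ 3) * (x2 * x3 ^ 3)

theorem quarticQR_vanishes_at_configuration (ε : ℂ) (hε : IsPrimitiveRoot ε 3)
    (a b c d : ℂ) :
    quarticQR a b c d 1 0 0 0 = 0 ∧ quarticQR a b c d 0 1 0 0 = 0 ∧
    quarticQR a b c d 0 0 1 0 = 0 ∧ quarticQR a b c d 0 0 0 1 = 0 ∧
    ∀ α β γ : ℕ, 1 ≤ α → α ≤ 3 → 1 ≤ β → β ≤ 3 → 1 ≤ γ → γ ≤ 3 →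
      quarticQR a b c d 1 (ε ^ α) (ε ^ β) (ε ^ γ) = 0 := by

  have h3 : ε ^ 3 = 1 := hε.pow_eq_one
  refine ⟨by simp [quarticQR], by simp [quarticQR], by simp [quarticQR],
    by simp [quarticQR], fun α β γ _ _ _ _ _ _ => ?_⟩
  have hu : (ε ^ α) ^ 3 = 1 := by rw [← pow_mul, mul_comm, pow_mul, h3, one_pow]
  have hv : (ε ^ β) ^ 3 = 1 := by rw [← pow_mul, mul_comm, pow_mul, h3, one_pow]
  have hw : (ε ^ γ) ^ 3 = 1 := by rw [← pow_mul, mul_comm, pow_mul, h3, one_pow]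
  set u := ε ^ α
  set v := ε ^ β
  set w := ε ^ γ
  unfold quarticQR
  linear_combination (a^2*(d^3-c^3) + c^2*(a^3-d^3)*v + d^2*(c^3-a^3)*w) * hu +
    (a^2*(b^3-d^3) + b^2*(d^3-a^3)*u + d^2*(a^3-b^3)*w) * hv +
    (a^2*(c^3-b^3) + b^2*(a^3-c^3)*u + c^2*(b^3-a^3)*v) * hw
end

section
/- For n ≥ 3, the degree n+2 polynomial Q_P defined with u = C(n,2)−1, v = C(n−1,2), w = C(n+1,2) by Q_P(x:y:z) = −cxy((ub^n+vc^n)(z^n−x^n)+(ua^n+vc^n)(y^n−z^n)) − bxz((ua^n+vb^n)(y^n−z^n)+(uc^n+vb^n)(x^n−y^n)) − ayz((ub^n+va^n)(z^n−x^n)+(uc^n+va^n)(x^n−y^n)) + wa^{n−1}bc·x²(y^n−z^n) + wab^{n−1}c·y²(z^n−x^n) + wabc^{n−1}·z²(x^n−y^n) vanishes at every point of the form (1:ε^α:ε^β) with ε a primitive n-th root of unity and 1 ≤ α, β ≤ n, and at the three coordinate points of ℙ². -/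
def uCoef (n : ℕ) : ℂ := (Nat.choose n 2 : ℂ) - 1
def vCoef (n : ℕ) : ℂ := (Nat.choose (n - 1) 2 : ℂ)
def wCoef (n : ℕ) : ℂ := (Nat.choose (n + 1) 2 : ℂ)

/-- The degree `n+2` unexpected curve for the Fermat-derived configuration of
points from `𝒜⁰_3(n)`, as a function. Here `u = C(n,2) − 1`, `v = C(n−1,2)`,
`w = C(n+1,2)`. -/
def QPn (n : ℕ) (a b c x y z : ℂ) : ℂ :=
  -(c * x * y * ((uCoef n * b ^ n + vCoef n * c ^ n) * (z ^ n - x ^ n) +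
      (uCoef n * a ^ n + vCoef n * c ^ n) * (y ^ n - z ^ n))) -
  b * x * z * ((uCoef n * a ^ n + vCoef n * b ^ n) * (y ^ n - z ^ n) +
      (uCoef n * c ^ n + vCoef n * b ^ n) * (x ^ n - y ^ n)) -
  a * y * z * ((uCoef n * b ^ n + vCoef n * a ^ n) * (z ^ n - x ^ n) +
      (uCoef n * c ^ n + vCoef n * a ^ n) * (x ^ n - y ^ n)) +
  wCoef n * a ^ (n - 1) * b * c * (x ^ 2 * (y ^ n - z ^ n)) +
  wCoef n * a * b ^ (n - 1) * c * (y ^ 2 * (z ^ n - x ^ n)) +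
  wCoef n * a * b * c ^ (n - 1) * (z ^ 2 * (x ^ n - y ^ n))

theorem QPn_vanishes_at_Fermat_points (n : ℕ) (hn : 3 ≤ n) (ε : ℂ)
    (hε : IsPrimitiveRoot ε n) (a b c : ℂ) :
    (∀ α β : ℕ, 1 ≤ α → α ≤ n → 1 ≤ β → β ≤ n →
      QPn n a b c 1 (ε ^ α) (ε ^ β) = 0) ∧
    QPn n a b c 1 0 0 = 0 ∧ QPn n a b c 0 1 0 = 0 ∧ QPn n a b c 0 0 1 = 0 := by
  have h : ε ^ n = 1 := hε.pow_eq_one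
  have hn0 : n ≠ 0 := by omega
  refine ⟨fun α β _ _ _ _ => ?_, ?_, ?_, ?_⟩
  · have hy : (ε ^ α) ^ n = 1 := by rw [← pow_mul, mul_comm, pow_mul, h, one_pow]
    have hz : (ε ^ β) ^ n = 1 := by rw [← pow_mul, mul_comm, pow_mul, h, one_pow]
    simp [QPn, hy, hz]
  all_goals simp [QPn, zero_pow hn0]
end

section
/- For odd m ≥ 3, the degree m+2 polynomial C_R(x_0:x_1:x_2) = a^{m+1}x_1x_2(x_1^m+x_2^m) + b^{m+1}x_0x_2(x_0^m+x_2^m) + c^{m+1}x_0x_1(x_0^m+x_1^m) − (m+1)[a(b^m+c^m)x_0^m x_1x_2 + b(a^m+c^m)x_0x_1^m x_2 + c(a^m+b^m)x_0x_1x_2^m] + Σ_{k=2}^{(m−1)/2} (−1)^k C(m+1,k)[a^{m+1−k}x_0^k x_1x_2(b^k x_1^{m−k}+c^k x_2^{m−k}) + b^{m+1−k}x_0x_1^k x_2(a^k x_0^{m−k}+c^k x_2^{m−k}) + c^{m+1−k}x_0x_1x_2^k(a^k x_0^{m−k}+b^k x_1^{m−k})] + (−1)^{(m+1)/2} C(m+1,(m+1)/2)[(ab)^{(m+1)/2}x_0^{(m+1)/2}x_1^{(m+1)/2}x_2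 + (bc)^{(m+1)/2}x_0x_1^{(m+1)/2}x_2^{(m+1)/2} + (ac)^{(m+1)/2}x_0^{(m+1)/2}x_1x_2^{(m+1)/2}] vanishes at the three coordinate points of ℙ² and at every point (1:−ε^α:0), (1:0:−ε^α), (0:1:−ε^α) for α ∈ {1,...,m}, where ε is a primitive m-th root of unity. -/
/-- The degree `m+2` unexpected curve `C_R` for odd `m`, as a function. -/
noncomputable def CRodd (m : ℕ) (a b c x0 x1 x2 : ℂ) : ℂ :=
  a ^ (m + 1) * x1 * x2 * (x1 ^ m + x2 ^ m) +
  b ^ (m + 1) * x0 * x2 * (x0 ^ m + x2 ^ m) +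
  c ^ (m + 1) * x0 * x1 * (x0 ^ m + x1 ^ m) -
  (m + 1 : ℂ) * (a * (b ^ m + c ^ m) * x0 ^ m * x1 * x2 +
    b * (a ^ m + c ^ m) * x0 * x1 ^ m * x2 +
    c * (a ^ m + b ^ m) * x0 * x1 * x2 ^ m) +
  (∑ k ∈ Finset.Icc 2 ((m - 1) / 2), (-1 : ℂ) ^ k * (Nat.choose (m + 1) k : ℂ) *
    (a ^ (m + 1 - k) * x0 ^ k * x1 * x2 * (b ^ k * x1 ^ (m - k) + c ^ k * x2 ^ (m - k)) +
     b ^ (m + 1 - k) * x0 * x1 ^ k * x2 * (a ^ k * x0 ^ (m - k) + c ^ k * x2 ^ (m - k)) +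
     c ^ (m + 1 - k) * x0 * x1 * x2 ^ k * (a ^ k * x0 ^ (m - k) + b ^ k * x1 ^ (m - k)))) +
  (-1 : ℂ) ^ ((m + 1) / 2) * (Nat.choose (m + 1) ((m + 1) / 2) : ℂ) *
    ((a * b) ^ ((m + 1) / 2) * x0 ^ ((m + 1) / 2) * x1 ^ ((m + 1) / 2) * x2 +
     (b * c) ^ ((m + 1) / 2) * x0 * x1 ^ ((m + 1) / 2) * x2 ^ ((m + 1) / 2) +
     (a * c) ^ ((m + 1) / 2) * x0 ^ ((m + 1) / 2) * x1 * x2 ^ ((m + 1) / 2))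

theorem CRodd_vanishes_at_Fermat_dual_points (m : ℕ) (hm : 3 ≤ m) (hodd : Odd m)
    (ε : ℂ) (hε : IsPrimitiveRoot ε m) (a b c : ℂ) :
    CRodd m a b c 1 0 0 = 0 ∧ CRodd m a b c 0 1 0 = 0 ∧ CRodd m a b c 0 0 1 = 0 ∧
    ∀ α : ℕ, 1 ≤ α → α ≤ m →
      CRodd m a b c 1 (-ε ^ α) 0 = 0 ∧
      CRodd m a b c 1 0 (-ε ^ α) = 0 ∧
      CRodd m a b c 0 1 (-ε ^ α) = 0 := by
  have hm0 : m ≠ 0 := by omega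
  have hp : (m + 1) / 2 ≠ 0 := by omega
  have key : ∀ α : ℕ, ((-ε ^ α) : ℂ) ^ m = -1 := by
    intro α
    rw [hodd.neg_pow, ← pow_mul, mul_comm, pow_mul, hε.pow_eq_one, one_pow]
  refine ⟨?_, ?_, ?_, ?_⟩
  · simp [CRodd, zero_pow hm0, zero_pow hp]
  · simp [CRodd, zero_pow hm0, zero_pow hp]
  · simp [CRodd, zero_pow hm0, zero_pow hp]
  · intro α h1 h2
    have hk := key α
    refine ⟨?_, ?_, ?_⟩ <;>

      · simp [CRodd, zero_pow hm0, zero_pow hp, hk, sub_eq_zero]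
        refine Finset.sum_eq_zero fun k hkk => ?_
        have h0 : k ≠ 0 := by
          simp only [Finset.mem_Icc] at hkk; omega
        simp [zero_pow h0]
end
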